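/- The polynomial P(x) = (x,x')^8 - (7/11)(x,x')^6(x',x')(x,x) + (5/44)(x,x')^4(x',x')^2(x,x)^2 - (1/176)(x,x')^2(x',x')^3(x,x)^3 + (1/26752)(x',x')^4(x,x)^4 on R^32 is harmonic for every fixed x' ∈ R^32. -/

import Mathlib

/-!
Write `u = ⟪x, a⟫`, `v = ⟪x, x⟫` and `c = ⟪a, a⟫` on a real inner product space of dimension `n`.
Since `∇u = a` and `∇v = 2x`, the Laplacian maps monomials to monomials:
`Δ (u ^ p * v ^ q) = p (p - 1) c u ^ (p - 2) v ^ q + 2 q (2 p + 2 q + n - 2) u ^ p v ^ (q - 1)`.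
For `P = ∑ₖ aₖ cᵏ u ^ (8 - 2k) vᵏ` the coefficient of `c ^ (k + 1) u ^ (6 - 2k) v ^ k` in `Δ P` is
`aₖ (8 - 2k) (7 - 2k) + 2 (k + 1) (n + 12 - 2k) aₖ₊₁`, and for `n = 32` the coefficients
`1, -7/11, 5/44, -1/176, 1/26752` of `P` are exactly those making all of these vanish.
-/

open scoped RealInnerProductSpace
open InnerProductSpace Laplacian

theorem natCast_mul_natCast_sub_one {R : Type*} [CommRing R] (n : ℕ) :
    (n : R) * ((n - 1 : ℕ) : R) = n * (n - 1) := by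
  rcases n with _ | n <;> simp

theorem natCast_mul_pow_sub_one_mul {R : Type*} [CommSemiring R] (n : ℕ) (s : R) :
    (n : R) * s ^ (n - 1) * s = n * s ^ n := by
  rcases n with _ | n
  · simp
  · simp [pow_succ, mul_assoc]

theorem natCast_mul_natCast_sub_one_mul_pow_sub_two_mul {R : Type*} [CommRing R] (n : ℕ) (s : R) :
    (n : R) * (n - 1) * s ^ (n - 2) * s = n * (n - 1) * s ^ (n - 1) := by
  rcases n with _ | _ | n
  · simp
  · simp
  · simp [pow_succ, mul_assoc]

variable {E F : Type*} [NormedAddCommGroup E] [InnerProductSpace ℝ E]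
  [NormedAddCommGroup F] [NormedSpace ℝ F]

section Laplacian

variable [FiniteDimensional ℝ E]

theorem laplacian_eq_sum_fderiv_fderiv {ι : Type*} [Fintype ι] (b : OrthonormalBasis ι ℝ E)
    {f : E → F} {x : E} (hf : DifferentiableAt ℝ (fderiv ℝ f) x) :
    Δ f x = ∑ i, fderiv ℝ (fun y => fderiv ℝ f y (b i)) x (b i) := by
  simp [laplacian_eq_iteratedFDeriv_orthonormalBasis f b, iteratedFDeriv_two_apply,
    fderiv_clm_apply hf (differentiableAt_const _)]

theorem EuclideanSpace.laplacian_eq_sum_fderiv_fderiv_single {ι : Type*} [Fintype ι]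
    [DecidableEq ι] {f : EuclideanSpace ℝ ι → F} {x : EuclideanSpace ℝ ι}
    (hf : DifferentiableAt ℝ (fderiv ℝ f) x) :
    Δ f x = ∑ i, fderiv ℝ (fun y => fderiv ℝ f y (EuclideanSpace.single i 1)) x
      (EuclideanSpace.single i 1) := by
  simpa only [EuclideanSpace.basisFun_apply] using
    laplacian_eq_sum_fderiv_fderiv (EuclideanSpace.basisFun ι ℝ) hf

theorem laplacian_sum_smul {ι : Type*} (s : Finset ι) (c : ι → ℝ) {f : ι → E → F} {x : E}
    (hf : ∀ i ∈ s, ContDiffAt ℝ 2 (f i) x) :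
    Δ (fun y => ∑ i ∈ s, c i • f i y) x = ∑ i ∈ s, c i • Δ (f i) x := by
  classical
  induction s using Finset.induction_on with
  | empty => simp
  | insert i s his ih =>
    simp only [Finset.sum_insert his]
    have hi := hf i (Finset.mem_insert_self i s)
    have hci : ContDiffAt ℝ 2 (fun y => c i • f i y) x := hi.const_smul (c i)
    have hs : ContDiffAt ℝ 2 (fun y => ∑ j ∈ s, c j • f j y) x :=
      ContDiffAt.sum fun j hj => (hf j (Finset.mem_insert_of_mem hj)).const_smul (c j)
    rw [← ih fun j hj => hf j (Finset.mem_insert_of_mem hj), ← laplacian_smul (c i) hi]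
    exact hci.laplacian_add hs

end Laplacian

theorem contDiff_inner_pow_mul_inner_self_pow (a : E) (p q : ℕ) {n : WithTop ℕ∞} :
    ContDiff ℝ n (fun y : E => ⟪y, a⟫ ^ p * ⟪y, y⟫ ^ q) :=
  ((contDiff_id.inner ℝ contDiff_const).pow p).mul ((contDiff_id.inner ℝ contDiff_id).pow q)

theorem hasFDerivAt_inner_pow_mul_inner_self_pow (a x : E) (p q : ℕ) :
    HasFDerivAt (fun y => ⟪y, a⟫ ^ p * ⟪y, y⟫ ^ q)
      ((p * ⟪x, a⟫ ^ (p - 1) * ⟪x, x⟫ ^ q) • innerSL ℝ a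
        + (2 * q * ⟪x, a⟫ ^ p * ⟪x, x⟫ ^ (q - 1)) • innerSL ℝ x) x := by
  have hu : HasFDerivAt (fun y : E => ⟪y, a⟫) (innerSL ℝ a) x := by
    simpa [real_inner_comm] using (innerSL ℝ a).hasFDerivAt
  have hv : HasFDerivAt (fun y : E => ⟪y, y⟫) (2 • innerSL ℝ x) x := by
    simpa [real_inner_self_eq_norm_sq] using (hasStrictFDerivAt_norm_sq x).hasFDerivAt
  refine ((hu.pow p).mul (hv.pow q)).congr_fderiv ?_
  ext w
  simp only [add_apply, smul_apply, innerSL_apply_apply, smul_eq_mul, nsmul_eq_mul]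
  ring

theorem fderiv_fderiv_inner_pow_mul_inner_self_pow (a x w : E) (p q : ℕ) :
    fderiv ℝ (fun y => fderiv ℝ (fun y => ⟪y, a⟫ ^ p * ⟪y, y⟫ ^ q) y w) x w
      = p * (p - 1) * ⟪x, a⟫ ^ (p - 2) * ⟪x, x⟫ ^ q * (⟪a, w⟫ * ⟪a, w⟫)
        + 4 * p * q * ⟪x, a⟫ ^ (p - 1) * ⟪x, x⟫ ^ (q - 1) * (⟪a, w⟫ * ⟪x, w⟫)
        + 4 * q * (q - 1) * ⟪x, a⟫ ^ p * ⟪x, x⟫ ^ (q - 2) * (⟪x, w⟫ * ⟪x, w⟫)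
        + 2 * q * ⟪x, a⟫ ^ p * ⟪x, x⟫ ^ (q - 1) * ⟪w, w⟫ := by
  have hfirst : (fun y => fderiv ℝ (fun y => ⟪y, a⟫ ^ p * ⟪y, y⟫ ^ q) y w) = fun y =>
      (p * ⟪a, w⟫) * (⟪y, a⟫ ^ (p - 1) * ⟪y, y⟫ ^ q)
        + (2 * q) * (⟪y, a⟫ ^ p * ⟪y, y⟫ ^ (q - 1)) * ⟪y, w⟫ := by
    ext y
    rw [(hasFDerivAt_inner_pow_mul_inner_self_pow a y p q).fderiv]
    simp only [add_apply, smul_apply, innerSL_apply_apply, smul_eq_mul]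
    ring
  have hw : HasFDerivAt (fun y : E => ⟪y, w⟫) (innerSL ℝ w) x := by
    simpa [real_inner_comm] using (innerSL ℝ w).hasFDerivAt
  rw [hfirst, ((((hasFDerivAt_inner_pow_mul_inner_self_pow a x (p - 1) q).const_mul _).fun_add
    (((hasFDerivAt_inner_pow_mul_inner_self_pow a x p (q - 1)).const_mul _).fun_mul hw))).fderiv]
  simp only [smul_add, add_apply, smul_apply, innerSL_apply_apply, smul_eq_mul, Nat.sub_sub]
  linear_combination ⟪a, w⟫ ^ 2 * ⟪x, a⟫ ^ (p - 2) * ⟪x, x⟫ ^ q * natCast_mul_natCast_sub_one (R := ℝ) p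
    + 4 * ⟪x, w⟫ ^ 2 * ⟪x, a⟫ ^ p * ⟪x, x⟫ ^ (q - 2) * natCast_mul_natCast_sub_one (R := ℝ) q

theorem laplacian_inner_pow_mul_inner_self_pow [FiniteDimensional ℝ E] (a x : E) (p q : ℕ) :
    Δ (fun y => ⟪y, a⟫ ^ p * ⟪y, y⟫ ^ q) x
      = p * (p - 1) * ⟪a, a⟫ * ⟪x, a⟫ ^ (p - 2) * ⟪x, x⟫ ^ q
        + 2 * q * (2 * p + 2 * q + Module.finrank ℝ E - 2) * ⟪x, a⟫ ^ p * ⟪x, x⟫ ^ (q - 1) := by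
  set b := stdOrthonormalBasis ℝ E
  have hsum (y z : E) : ∑ i, ⟪y, b i⟫ * ⟪z, b i⟫ = ⟪y, z⟫ := by
    simpa only [real_inner_comm z] using b.sum_inner_mul_inner y z
  have hdim : ∑ i, ⟪b i, b i⟫ = Module.finrank ℝ E := by
    simp [b.orthonormal.1]
  rw [laplacian_eq_sum_fderiv_fderiv b
    (((contDiff_inner_pow_mul_inner_self_pow a p q).fderiv_right (m := 1) le_rfl).differentiable
      one_ne_zero x)]
  simp only [fderiv_fderiv_inner_pow_mul_inner_self_pow, Finset.sum_add_distrib,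
    ← Finset.mul_sum, hsum, hdim]
  rw [real_inner_comm x a]
  linear_combination 4 * q * ⟪x, x⟫ ^ (q - 1) * natCast_mul_pow_sub_one_mul p ⟪x, a⟫
    + 4 * ⟪x, a⟫ ^ p * natCast_mul_natCast_sub_one_mul_pow_sub_two_mul q ⟪x, x⟫

/-- the degree-8 polynomial on ℝ³² is harmonic for every fixed x'. -/
theorem harmonic_deg8_dim32 (x' : EuclideanSpace ℝ (Fin 32)) :
    let P : EuclideanSpace ℝ (Fin 32) → ℝ := fun x =>
      ⟪x, x'⟫ ^ 8 - (7 / 11) * ⟪x, x'⟫ ^ 6 * ⟪x', x'⟫ * ⟪x, x⟫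
        + (5 / 44) * ⟪x, x'⟫ ^ 4 * ⟪x', x'⟫ ^ 2 * ⟪x, x⟫ ^ 2
        - (1 / 176) * ⟪x, x'⟫ ^ 2 * ⟪x', x'⟫ ^ 3 * ⟪x, x⟫ ^ 3
        + (1 / 26752) * ⟪x', x'⟫ ^ 4 * ⟪x, x⟫ ^ 4
    ∀ x : EuclideanSpace ℝ (Fin 32),
      (∑ i : Fin 32,
        fderiv ℝ (fun y => fderiv ℝ P y (EuclideanSpace.single i 1)) x
          (EuclideanSpace.single i 1)) = 0 := by
  intro P x
  have hP : P = fun y => ∑ k : Fin 5,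
      ![1, -(7 / 11) * ⟪x', x'⟫, (5 / 44) * ⟪x', x'⟫ ^ 2, -(1 / 176) * ⟪x', x'⟫ ^ 3,
        (1 / 26752) * ⟪x', x'⟫ ^ 4] k • (⟪y, x'⟫ ^ (8 - 2 * k : ℕ) * ⟪y, y⟫ ^ (k : ℕ)) := by
    funext y
    simp only [P, Fin.sum_univ_five, smul_eq_mul, Matrix.cons_val]
    norm_num
    ring
  have hmon (k : Fin 5) := contDiff_inner_pow_mul_inner_self_pow x' (8 - 2 * k) k (n := 2)
  have hPsmooth : ContDiff ℝ 2 P := hP ▸ ContDiff.sum fun k _ => (hmon k).const_smul _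
  rw [← EuclideanSpace.laplacian_eq_sum_fderiv_fderiv_single
      ((hPsmooth.fderiv_right (m := 1) le_rfl).differentiable one_ne_zero x), hP,
    laplacian_sum_smul _ _ fun k _ => (hmon k).contDiffAt]
  simp only [Fin.sum_univ_five, smul_eq_mul, laplacian_inner_pow_mul_inner_self_pow,
    finrank_euclideanSpace_fin, Matrix.cons_val]
  norm_num
  ring
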